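/- arXiv:1908.03765 — 2 statements merged into one kernel-verified Lean document; each statement's English description precedes it below -/
import Mathlib

section
/- Let K be a field and p > 2 a prime number. Let R_{(p,p)} be the set of all natural numbers r such that there exist integers c, d with 0 < c < p, 0 < d < p and c + d ≥ p for which r is the reduction number of the ideal (x^p, y^p, x^c y^d) with respect to J = (x^p, y^p). Then the cardinality of R_{(p,p)} is at most (p+1)/2; equivalently, (p − 1) − |R_{(p,p)}| ≥ (p − 1)/2 − 1. -/
open MvPolynomial

/-- The monomial `x^c y^d` in `K[x,y]`. -/
noncomputable def mono (K : Type*) [Field K] (c d : ℕ) : MvPolynomial (Fin 2) K :=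
  X 0 ^ c * X 1 ^ d

/-- The ideal `J = (x^a, y^b)`. -/
noncomputable def Jab (K : Type*) [Field K] (a b : ℕ) : Ideal (MvPolynomial (Fin 2) K) :=
  Ideal.span {mono K a 0, mono K 0 b}

/-- For `A ⊆ {0,…,g}` with `g = gcd(a,b)`, the ideal `I_A` generated by the
monomials `x^(i·(a/g)) y^(b − i·(b/g))` for `i ∈ A`. -/
noncomputable def IA (K : Type*) [Field K] (a b : ℕ) (A : Finset ℕ) :
    Ideal (MvPolynomial (Fin 2) K) :=
  Ideal.span ((fun i : ℕ =>
    mono K (i * (a / Nat.gcd a b)) (b - i * (b / Nat.gcd a b))) '' (A : Set ℕ))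

/-- The reduction number of `I` with respect to `J = (x^a, y^b)`: the least `r ≥ 0`
with `I^(r+1) = J·I^r`. -/
noncomputable def redNum (K : Type*) [Field K] (a b : ℕ)
    (I : Ideal (MvPolynomial (Fin 2) K)) : ℕ :=
  sInf {r : ℕ | I ^ (r + 1) = Jab K a b * I ^ r}

/-!
Write `I = J + (f)` with `f = x^c y^d`. Then `I^(r+1) = J I^r` iff `f^(r+1) ∈ J I^r`, and as all
ideals involved are monomial, this holds iff `f^s ∈ J^s` for some `1 ≤ s ≤ r + 1`, i.e. iff
`i p ≤ s c` and `j p ≤ s d` for some `i + j = s`. So `r(I) + 1` is the least such `s`.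

If `c + d = p`, both inequalities must be equalities, so `p ∣ s c` and `r(I) = p - 1`.
If `c + d > p`, it suffices that `s c mod p ≤ s`; the residues of `t c` and `(t + 1) c`, where
`p = 2t + 1`, add up to `0` or `p`, so one of `s = t, t + 1` works, while `s = 1` never does.
Hence `r(I) ∈ [1, (p - 1)/2]`, and `R_(p,p) ⊆ [1, (p - 1)/2] ∪ {p - 1}`.
-/

open Pointwise

namespace Ideal

variable {R : Type*} [CommSemiring R] (J : Ideal R) (f : R)

theorem sup_span_singleton_pow_succ_le (n : ℕ) :
    (J ⊔ span {f}) ^ (n + 1) ≤ J * (J ⊔ span {f}) ^ n ⊔ span {f ^ (n + 1)} := by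
  set I := J ⊔ span {f}
  induction n with
  | zero => simp [I]
  | succ n ih =>
    have hfI : I ^ n * span {f} ≤ I ^ (n + 1) := by
      rw [pow_succ]; exact mul_mono_right le_sup_right
    calc I ^ (n + 2) = J * I ^ (n + 1) ⊔ I ^ (n + 1) * span {f} := by
          rw [pow_succ, show I = J ⊔ span {f} from rfl, mul_sup, mul_comm _ J]
      _ ≤ J * I ^ (n + 1) ⊔ (J * I ^ n ⊔ span {f ^ (n + 1)}) * span {f} := by
          gcongr
      _ = J * I ^ (n + 1) ⊔ (J * (I ^ n * span {f}) ⊔ span {f ^ (n + 2)}) := by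
          rw [sup_mul, mul_assoc, span_singleton_mul_span_singleton, ← pow_succ]
      _ ≤ J * I ^ (n + 1) ⊔ span {f ^ (n + 2)} := by
          grw [hfI, ← sup_assoc, sup_idem]

theorem sup_span_singleton_pow_succ_eq_mul_iff (n : ℕ) :
    (J ⊔ span {f}) ^ (n + 1) = J * (J ⊔ span {f}) ^ n ↔
      f ^ (n + 1) ∈ J * (J ⊔ span {f}) ^ n := by
  constructor
  · intro h
    exact h ▸ pow_mem_pow (mem_sup_right (mem_span_singleton_self f)) _
  · intro h
    refine le_antisymm ?_ ?_
    · grw [sup_span_singleton_pow_succ_le, sup_le_iff]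
      exact ⟨le_rfl, (span_singleton_le_iff_mem _).2 h⟩
    · rw [pow_succ']; exact mul_mono_left le_sup_left

end Ideal

namespace MvPolynomial

variable {σ R : Type*} [CommSemiring R]

theorem span_monomial_one_image_mul (A B : Set (σ →₀ ℕ)) :
    Ideal.span ((monomial · (1 : R)) '' A) * Ideal.span ((monomial · 1) '' B) =
      Ideal.span ((monomial · 1) '' (A + B)) := by
  rw [Ideal.span_mul_span', ← Set.image2_add, ← Set.image2_mul,
    Set.image_image2_distrib (f' := (· * ·)) fun a b ↦ by rw [monomial_mul, one_mul]]

theorem span_monomial_one_image_pow (A : Set (σ →₀ ℕ)) (n : ℕ) :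
    Ideal.span ((monomial · (1 : R)) '' A) ^ n = Ideal.span ((monomial · 1) '' (n • A)) := by
  induction n with
  | zero => simp [← Set.singleton_zero]
  | succ n ih => rw [pow_succ, ih, span_monomial_one_image_mul, succ_nsmul]

end MvPolynomial

theorem Set.mem_nsmul_triple {M : Type*} [AddCommMonoid M] {a b e w : M} {n : ℕ} :
    w ∈ n • ({a, b, e} : Set M) ↔
      ∃ i j k, i + j + k = n ∧ w = i • a + j • b + k • e := by
  induction n generalizing w with
  | zero => simp
  | succ n ih =>
    rw [succ_nsmul, Set.mem_add]
    constructor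
    · rintro ⟨v, hv, x, hx, rfl⟩
      obtain ⟨i, j, k, rfl, rfl⟩ := ih.1 hv
      rcases hx with rfl | rfl | rfl
      · exact ⟨i + 1, j, k, by omega, by simp only [add_nsmul, one_nsmul]; abel⟩
      · exact ⟨i, j + 1, k, by omega, by simp only [add_nsmul, one_nsmul]; abel⟩
      · exact ⟨i, j, k + 1, by omega, by simp only [add_nsmul, one_nsmul]; abel⟩
    · rintro ⟨i, j, k, hn, rfl⟩
      rcases i with _ | i
      · rcases j with _ | j
        · rcases k with _ | k
          · omega
          · exact ⟨_, ih.2 ⟨0, 0, k, by omega, rfl⟩, e, by simp, by simp [succ_nsmul]⟩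
        · exact ⟨_, ih.2 ⟨0, j, k, by omega, rfl⟩, b, by simp, by simp [succ_nsmul]; abel⟩
      · exact ⟨_, ih.2 ⟨i, j, k, by omega, rfl⟩, a, by simp, by simp [succ_nsmul]; abel⟩

/-- `(x^c y^d)^s ∈ (x^a, y^b)^s`, read off the exponents. -/
def SplitsAt (a b c d s : ℕ) : Prop :=
  ∃ i j, i + j = s ∧ i * a ≤ s * c ∧ j * b ≤ s * d

section SplitsAt

variable {a b c d s : ℕ}

theorem not_splitsAt_one (hc : c < a) (hd : d < b) : ¬ SplitsAt a b c d 1 := by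
  rintro ⟨i, j, hij, hi, hj⟩
  obtain ⟨rfl, rfl⟩ | ⟨rfl, rfl⟩ : i = 1 ∧ j = 0 ∨ i = 0 ∧ j = 1 := by omega
  all_goals omega

theorem splitsAt_of_add_eq (hcd : c + d = a) : SplitsAt a a c d a := by
  exact ⟨c, d, hcd, (mul_comm c a).le, (mul_comm d a).le⟩

theorem not_splitsAt_of_add_eq_prime (hp : a.Prime) (hc : 0 < c) (hcp : c < a) (hcd : c + d = a)
    (hs : 0 < s) (hsp : s < a) : ¬ SplitsAt a a c d s := by
  rintro ⟨i, j, rfl, hi, hj⟩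
  have heq : i * a = (i + j) * c := by subst hcd; nlinarith
  have hdvd : a ∣ (i + j) * c := ⟨i, by rw [← heq, mul_comm]⟩
  rcases hp.dvd_mul.1 hdvd with h | h
  · exact absurd (Nat.le_of_dvd hs h) (by omega)
  · exact absurd (Nat.le_of_dvd hc h) (by omega)

theorem splitsAt_of_mod_le (hcp : c ≤ a) (hcd : a < c + d) (h : s * c % a ≤ s) :
    SplitsAt a a c d s := by
  refine ⟨s * c / a, s - s * c / a, ?_, Nat.div_mul_le_self _ _, ?_⟩
  · have : s * c / a ≤ s :=
      Nat.div_le_of_le_mul (by rw [mul_comm a]; exact Nat.mul_le_mul_left s hcp)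
    omega
  · have h1 := Nat.div_add_mod' (s * c) a
    have h2 : s * (a + 1) ≤ s * (c + d) := Nat.mul_le_mul_left s hcd
    rw [mul_add, mul_add, mul_one] at h2
    rw [Nat.sub_mul]
    omega

theorem exists_mul_mod_le (t c : ℕ) :
    ∃ s, t ≤ s ∧ s ≤ t + 1 ∧ s * c % (2 * t + 1) ≤ s := by
  by_cases h : t * c % (2 * t + 1) ≤ t
  · exact ⟨t, le_rfl, by omega, h⟩
  · refine ⟨t + 1, by omega, le_rfl, ?_⟩
    have hsum := Nat.add_mod_add_ite (t * c) ((t + 1) * c) (2 * t + 1)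
    rw [show t * c + (t + 1) * c = c * (2 * t + 1) by ring, Nat.mul_mod_left] at hsum
    have := Nat.mod_lt (t * c) (show 0 < 2 * t + 1 by omega)
    split_ifs at hsum <;> omega

end SplitsAt

noncomputable abbrev monoExp (c d : ℕ) : Fin 2 →₀ ℕ :=
  Finsupp.single 0 c + Finsupp.single 1 d

theorem monoExp_add (c d c' d' : ℕ) :
    monoExp c d + monoExp c' d' = monoExp (c + c') (d + d') := by
  simp only [monoExp, Finsupp.single_add]; abel

theorem nsmul_monoExp (n c d : ℕ) : n • monoExp c d = monoExp (n * c) (n * d) := by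
  simp [monoExp, Finsupp.smul_single]

theorem monoExp_le_monoExp_iff {c d c' d' : ℕ} :
    monoExp c d ≤ monoExp c' d' ↔ c ≤ c' ∧ d ≤ d' := by
  refine ⟨fun h ↦ ⟨by simpa using h 0, by simpa using h 1⟩, fun ⟨hc, hd⟩ i ↦ ?_⟩
  fin_cases i <;> simpa

section RedNum

variable {K : Type*} [Field K] {a b c d s : ℕ}

theorem mono_eq_monomial (c d : ℕ) : mono K c d = monomial (monoExp c d) 1 := by
  rw [mono, X_pow_eq_monomial, X_pow_eq_monomial, monomial_mul, one_mul]

theorem mono_pow_succ_mem_Jab_mul_iff (r : ℕ) :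
    mono K c d ^ (r + 1) ∈ Jab K a b * Ideal.span {mono K a 0, mono K 0 b, mono K c d} ^ r ↔
      ∃ s, 0 < s ∧ s ≤ r + 1 ∧ SplitsAt a b c d s := by
  have hJ : Jab K a b = Ideal.span ((monomial · 1) '' {monoExp a 0, monoExp 0 b}) := by
    simp [Jab, mono_eq_monomial, Set.image_insert_eq]
  have hI : Ideal.span {mono K a 0, mono K 0 b, mono K c d} =
      Ideal.span ((monomial · 1) '' {monoExp a 0, monoExp 0 b, monoExp c d}) := by
    simp [mono_eq_monomial, Set.image_insert_eq]
  rw [hJ, hI, span_monomial_one_image_pow, span_monomial_one_image_mul, mono_eq_monomial,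
    monomial_pow, one_pow, mem_ideal_span_monomial_image]
  classical
  simp only [support_monomial, one_ne_zero, if_false, Finset.mem_singleton, forall_eq,
    Set.mem_add, Set.mem_nsmul_triple, Set.mem_insert_iff, Set.mem_singleton_iff]
  constructor
  · rintro ⟨_, ⟨x, hx, _, ⟨i, j, k, rfl, rfl⟩, rfl⟩, hle⟩
    rcases hx with rfl | rfl <;>
      simp only [nsmul_monoExp, monoExp_add, monoExp_le_monoExp_iff] at hle
    · exact ⟨i + 1 + j, by omega, by omega, i + 1, j, rfl, by linarith, by linarith⟩
    · exact ⟨i + (j + 1), by omega, by omega, i, j + 1, rfl, by linarith, by linarith⟩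
  · rintro ⟨s, hs, hsr, i, j, rfl, hi, hj⟩
    obtain ⟨k, hk⟩ : ∃ k, r + 1 = i + j + k := ⟨r + 1 - (i + j), by omega⟩
    rw [hk]
    rcases i with _ | i
    · obtain ⟨j, rfl⟩ : ∃ j', j = j' + 1 := ⟨j - 1, by omega⟩
      refine ⟨_, ⟨_, .inr rfl, _, ⟨0, j, k, by omega, rfl⟩, rfl⟩, ?_⟩
      simp only [nsmul_monoExp, monoExp_add, monoExp_le_monoExp_iff]
      constructor <;> linarith
    · refine ⟨_, ⟨_, .inl rfl, _, ⟨i, j, k, by omega, rfl⟩, rfl⟩, ?_⟩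
      simp only [nsmul_monoExp, monoExp_add, monoExp_le_monoExp_iff]
      constructor <;> linarith

theorem redNum_eq_sInf_splitsAt :
    redNum K a b (Ideal.span {mono K a 0, mono K 0 b, mono K c d}) =
      sInf {r | ∃ s, 0 < s ∧ s ≤ r + 1 ∧ SplitsAt a b c d s} := by
  have hI : Ideal.span {mono K a 0, mono K 0 b, mono K c d} =
      Jab K a b ⊔ Ideal.span {mono K c d} := by
    rw [Jab, ← Ideal.span_union, Set.insert_union, Set.singleton_union]
  unfold redNum
  congr 1
  ext r
  rw [Set.mem_ofPred_eq, hI, Ideal.sup_span_singleton_pow_succ_eq_mul_iff, ← hI,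
    mono_pow_succ_mem_Jab_mul_iff, Set.mem_ofPred_eq]

theorem redNum_le_of_splitsAt (hs : 0 < s) (h : SplitsAt a b c d s) :
    redNum K a b (Ideal.span {mono K a 0, mono K 0 b, mono K c d}) ≤ s - 1 := by
  rw [redNum_eq_sInf_splitsAt]
  exact Nat.sInf_le ⟨s, hs, by omega, h⟩

theorem exists_splitsAt_le_redNum_add_one (hs : 0 < s) (h : SplitsAt a b c d s) :
    ∃ s', 0 < s' ∧ s' ≤ redNum K a b (Ideal.span {mono K a 0, mono K 0 b, mono K c d}) + 1 ∧
      SplitsAt a b c d s' := by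
  rw [redNum_eq_sInf_splitsAt]
  exact Nat.sInf_mem (s := {r | ∃ s, 0 < s ∧ s ≤ r + 1 ∧ SplitsAt a b c d s})
    ⟨s - 1, s, hs, by omega, h⟩

theorem redNum_eq_of_add_eq_prime {p : ℕ} (hp : p.Prime) (hc : 0 < c) (hcp : c < p)
    (hcd : c + d = p) :
    redNum K p p (Ideal.span {mono K p 0, mono K 0 p, mono K c d}) = p - 1 := by
  have hsplit := splitsAt_of_add_eq hcd
  refine le_antisymm (redNum_le_of_splitsAt hp.pos hsplit) ?_
  obtain ⟨s, hs, hsr, hss⟩ := exists_splitsAt_le_redNum_add_one (K := K) hp.pos hsplit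
  by_contra
  exact not_splitsAt_of_add_eq_prime hp hc hcp hcd hs (by omega) hss

theorem redNum_mem_Icc_of_lt_add {p : ℕ} (hp : Odd p) (hp1 : 1 < p) (hcp : c < p) (hdp : d < p)
    (hcd : p < c + d) :
    redNum K p p (Ideal.span {mono K p 0, mono K 0 p, mono K c d}) ∈
      Finset.Icc 1 ((p - 1) / 2) := by
  obtain ⟨t, rfl⟩ := hp
  obtain ⟨s, hts, hst, hmod⟩ := exists_mul_mod_le t c
  have hsplit := splitsAt_of_mod_le hcp.le hcd hmod
  have hs : 0 < s := by omega
  have hle := redNum_le_of_splitsAt (K := K) hs hsplit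
  obtain ⟨s', hs', hs'r, hs'split⟩ := exists_splitsAt_le_redNum_add_one (K := K) hs hsplit
  have hs'1 : s' ≠ 1 := by
    rintro rfl
    exact not_splitsAt_one hcp hdp hs'split
  rw [Finset.mem_Icc]
  omega

end RedNum

theorem stmt11 (K : Type*) [Field K] (p : ℕ) (hp : p.Prime) (hp2 : 2 < p) :
    {r : ℕ | ∃ c d : ℕ, 0 < c ∧ c < p ∧ 0 < d ∧ d < p ∧ p ≤ c + d ∧
        r = redNum K p p (Ideal.span {mono K p 0, mono K 0 p, mono K c d})}.ncard
      ≤ (p + 1) / 2 := by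
  have hsub : {r : ℕ | ∃ c d : ℕ, 0 < c ∧ c < p ∧ 0 < d ∧ d < p ∧ p ≤ c + d ∧
      r = redNum K p p (Ideal.span {mono K p 0, mono K 0 p, mono K c d})} ⊆
      ↑(Finset.Icc 1 ((p - 1) / 2) ∪ {p - 1}) := by
    rintro r ⟨c, d, hc, hcp, -, hdp, hcd, rfl⟩
    rcases hcd.eq_or_lt with hcd | hcd
    · simp [redNum_eq_of_add_eq_prime hp hc hcp hcd.symm]
    · exact Finset.mem_union_left _
        (redNum_mem_Icc_of_lt_add (hp.odd_of_ne_two hp2.ne') hp.one_lt hcp hdp hcd)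
  calc _ ≤ (Finset.Icc 1 ((p - 1) / 2) ∪ {p - 1}).card := by
        rw [← Set.ncard_coe_finset]; exact Set.ncard_le_ncard hsub (Finset.finite_toSet _)
    _ ≤ (p - 1) / 2 + 1 := by
        simpa using Finset.card_union_le (Finset.Icc 1 ((p - 1) / 2)) {p - 1}
    _ = (p + 1) / 2 := by omega
end

section
/- Let K be a field and a, b integers with 1 < a ≤ b. Let I be a monomial ideal of the class I_{a,b} with I ≠ J = (x^a, y^b). Then: (a) if L₁ and L₂ are monomial ideals of the class I_{a,b} with I ⊆ Lᵢ, Lᵢ ≠ J and Lᵢ² = J·Lᵢ for i = 1,2, then L₁ ∩ L₂ ≠ J and (L₁ ∩ L₂)² = J·(L₁ ∩ L₂); (b) there exists a unique monomial ideal L of the class I_{a,b} with I ⊆ L, L ≠ J and L² = J·L which is contained in every monomial ideal L' of the class I_{a,b} satisfying I ⊆ L', L' ≠ J and L'² = J·L'. -/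
open MvPolynomial

/-- An ideal of `K[x,y]` is a monomial ideal if it is generated by a set of
monomials `x^c y^d`. -/
def IsMonomialIdeal (K : Type*) [Field K] (I : Ideal (MvPolynomial (Fin 2) K)) : Prop :=
  ∃ S : Set (ℕ × ℕ), I = Ideal.span ((fun p : ℕ × ℕ => mono K p.1 p.2) '' S)

/-- `I` belongs to the class `I_{a,b}`: it is a monomial ideal containing
`x^a` and `y^b`, and every monomial `x^c y^d ∈ I` satisfies `bc + ad ≥ ab`. -/
def InClass (K : Type*) [Field K] (a b : ℕ) (I : Ideal (MvPolynomial (Fin 2) K)) : Prop :=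
  IsMonomialIdeal K I ∧ mono K a 0 ∈ I ∧ mono K 0 b ∈ I ∧
    ∀ c d : ℕ, mono K c d ∈ I → a * b ≤ b * c + a * d

section Aux
variable {K : Type*} [Field K]


noncomputable def ee (p : ℕ × ℕ) : Fin 2 →₀ ℕ := Finsupp.single 0 p.1 + Finsupp.single 1 p.2

lemma ee0 (p : ℕ × ℕ) : ee p 0 = p.1 := by simp [ee, Finsupp.single_apply]
lemma ee1 (p : ℕ × ℕ) : ee p 1 = p.2 := by simp [ee, Finsupp.single_apply]
lemma ee_le {p : ℕ × ℕ} {f : Fin 2 →₀ ℕ} : ee p ≤ f ↔ p.1 ≤ f 0 ∧ p.2 ≤ f 1 := by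
  rw [Finsupp.le_def]
  constructor
  · intro h
    exact ⟨by simpa [ee0] using h 0, by simpa [ee1] using h 1⟩
  · rintro ⟨h0, h1⟩ i
    fin_cases i
    · simpa [ee0] using h0
    · simpa [ee1] using h1
lemma mono_eq (c d : ℕ) : mono K c d = monomial (ee (c, d)) (1 : K) := by
  rw [mono, X_pow_eq_monomial, X_pow_eq_monomial, monomial_mul, one_mul]; rfl
lemma mono_mul (c d c' d' : ℕ) :
    mono K c d * mono K c' d' = mono K (c + c') (d + d') := by
  simp only [mono]; ring
lemma mono_support (c d : ℕ) : (mono K c d).support = {ee (c, d)} := by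
  classical
  rw [mono_eq, support_monomial, if_neg one_ne_zero]
lemma image_eq (S : Set (ℕ × ℕ)) :
    (fun p : ℕ × ℕ => mono K p.1 p.2) '' S
      = (fun s => monomial s (1 : K)) '' (ee '' S) := by
  rw [Set.image_image]
  apply Set.image_congr'
  intro p
  rw [mono_eq]

/-- membership criterion for arbitrary polynomials -/
lemma memSpanPoly {S : Set (ℕ × ℕ)} {f : MvPolynomial (Fin 2) K} :
    f ∈ Ideal.span ((fun p : ℕ × ℕ => mono K p.1 p.2) '' S)
      ↔ ∀ xi ∈ f.support, ∃ p ∈ S, p.1 ≤ xi 0 ∧ p.2 ≤ xi 1 := by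
  rw [image_eq, mem_ideal_span_monomial_image]
  constructor
  · intro h xi hxi
    obtain ⟨si, ⟨p, hp, rfl⟩, hle⟩ := h xi hxi
    exact ⟨p, hp, ee_le.mp hle⟩
  · intro h xi hxi
    obtain ⟨p, hp, h1, h2⟩ := h xi hxi
    exact ⟨ee p, ⟨p, hp, rfl⟩, ee_le.mpr ⟨h1, h2⟩⟩

/-- membership criterion for monomials -/
lemma memMono {S : Set (ℕ × ℕ)} {c d : ℕ} :
    mono K c d ∈ Ideal.span ((fun p : ℕ × ℕ => mono K p.1 p.2) '' S)
      ↔ ∃ p ∈ S, p.1 ≤ c ∧ p.2 ≤ d := by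
  rw [memSpanPoly]
  constructor
  · intro h
    have := h (ee (c, d)) (by rw [mono_support]; exact Finset.mem_singleton_self _)
    simpa [ee0, ee1] using this
  · rintro ⟨p, hp, h1, h2⟩ xi hxi
    rw [mono_support, Finset.mem_singleton] at hxi
    subst hxi
    exact ⟨p, hp, by simpa [ee0, ee1] using ⟨h1, h2⟩⟩

lemma span_mul (A B : Set (ℕ × ℕ)) :
    Ideal.span ((fun p : ℕ × ℕ => mono K p.1 p.2) '' A)
        * Ideal.span ((fun p : ℕ × ℕ => mono K p.1 p.2) '' B)
      = Ideal.span ((fun p : ℕ × ℕ => mono K p.1 p.2) '' (Set.image2 (· + ·) A B)) := by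
  rw [Ideal.span_mul_span']
  congr 1
  ext x
  constructor
  · rintro ⟨_, ⟨p, hp, rfl⟩, _, ⟨q, hq, rfl⟩, rfl⟩
    refine ⟨p + q, Set.mem_image2_of_mem hp hq, ?_⟩
    show mono K (p + q).1 (p + q).2 = mono K p.1 p.2 * mono K q.1 q.2
    rw [mono_mul, Prod.fst_add, Prod.snd_add]
  · rintro ⟨_, ⟨p, hp, q, hq, rfl⟩, rfl⟩
    refine ⟨mono K p.1 p.2, ⟨p, hp, rfl⟩, mono K q.1 q.2, ⟨q, hq, rfl⟩, ?_⟩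
    show mono K p.1 p.2 * mono K q.1 q.2 = mono K (p + q).1 (p + q).2
    rw [mono_mul, Prod.fst_add, Prod.snd_add]

lemma Jab_eq (a b : ℕ) :
    Jab K a b = Ideal.span ((fun p : ℕ × ℕ => mono K p.1 p.2) '' {(a, 0), (0, b)}) := by
  rw [Jab, Set.image_pair]

lemma mem_J_mul {a b : ℕ} (S : Set (ℕ × ℕ)) (c d : ℕ) :
    mono K c d ∈ Jab K a b * Ideal.span ((fun p : ℕ × ℕ => mono K p.1 p.2) '' S)
      ↔ (a ≤ c ∧ mono K (c - a) d ∈ Ideal.span ((fun p : ℕ × ℕ => mono K p.1 p.2) '' S))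
        ∨ (b ≤ d ∧ mono K c (d - b) ∈ Ideal.span ((fun p : ℕ × ℕ => mono K p.1 p.2) '' S)) := by
  rw [Jab_eq, span_mul, memMono]
  constructor
  · rintro ⟨_, ⟨q, hq, r, hr, rfl⟩, h1, h2⟩
    rcases hq with rfl | rfl
    · left
      have hq1 : a + r.1 ≤ c := by simpa using h1
      have hq2 : r.2 ≤ d := by simpa using h2
      exact ⟨by omega, memMono.mpr ⟨r, hr, by omega, hq2⟩⟩
    · right
      have hq1 : r.1 ≤ c := by simpa using h1
      have hq2 : b + r.2 ≤ d := by simpa using h2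
      exact ⟨by omega, memMono.mpr ⟨r, hr, hq1, by omega⟩⟩
  · rintro (⟨hac, hm⟩ | ⟨hbd, hm⟩)
    · obtain ⟨r, hr, h1, h2⟩ := memMono.mp hm
      refine ⟨(a, 0) + r, Set.mem_image2_of_mem (by simp) hr, ?_, ?_⟩ <;> simp <;> omega
    · obtain ⟨r, hr, h1, h2⟩ := memMono.mp hm
      refine ⟨(0, b) + r, Set.mem_image2_of_mem (by simp) hr, ?_, ?_⟩ <;> simp <;> omega

lemma inf_eq (S₁ S₂ : Set (ℕ × ℕ)) :
    Ideal.span ((fun p : ℕ × ℕ => mono K p.1 p.2) '' S₁)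
        ⊓ Ideal.span ((fun p : ℕ × ℕ => mono K p.1 p.2) '' S₂)
      = Ideal.span ((fun p : ℕ × ℕ => mono K p.1 p.2) ''
          {p : ℕ × ℕ | mono K p.1 p.2 ∈ Ideal.span ((fun p : ℕ × ℕ => mono K p.1 p.2) '' S₁)
            ∧ mono K p.1 p.2 ∈ Ideal.span ((fun p : ℕ × ℕ => mono K p.1 p.2) '' S₂)}) := by
  apply le_antisymm
  · intro f hf
    rw [Submodule.mem_inf] at hf
    obtain ⟨h1, h2⟩ := hf
    rw [memSpanPoly] at h1 h2 ⊢
    intro xi hxi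
    refine ⟨(xi 0, xi 1), ⟨?_, ?_⟩, le_refl _, le_refl _⟩
    · obtain ⟨p, hp, hle⟩ := h1 xi hxi
      exact memMono.mpr ⟨p, hp, hle⟩
    · obtain ⟨p, hp, hle⟩ := h2 xi hxi
      exact memMono.mpr ⟨p, hp, hle⟩
  · rw [Ideal.span_le]
    rintro _ ⟨p, ⟨hp1, hp2⟩, rfl⟩
    exact ⟨hp1, hp2⟩

/-- Abbreviation for monomial-generated ideals. -/
noncomputable def sp (K : Type*) [Field K] (S : Set (ℕ × ℕ)) :
    Ideal (MvPolynomial (Fin 2) K) :=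
  Ideal.span ((fun p : ℕ × ℕ => mono K p.1 p.2) '' S)

lemma sp_def (S : Set (ℕ × ℕ)) :
    Ideal.span ((fun p : ℕ × ℕ => mono K p.1 p.2) '' S) = sp K S := rfl

lemma memMono' {S : Set (ℕ × ℕ)} {c d : ℕ} :
    mono K c d ∈ sp K S ↔ ∃ p ∈ S, p.1 ≤ c ∧ p.2 ≤ d := memMono

lemma span_mul' (A B : Set (ℕ × ℕ)) :
    sp K A * sp K B = sp K (Set.image2 (· + ·) A B) := span_mul A B

lemma mem_J_mul' {a b : ℕ} (S : Set (ℕ × ℕ)) (c d : ℕ) :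
    mono K c d ∈ Jab K a b * sp K S
      ↔ (a ≤ c ∧ mono K (c - a) d ∈ sp K S)
        ∨ (b ≤ d ∧ mono K c (d - b) ∈ sp K S) := mem_J_mul S c d

lemma inf_eq' (S₁ S₂ : Set (ℕ × ℕ)) :
    sp K S₁ ⊓ sp K S₂
      = sp K {p : ℕ × ℕ | mono K p.1 p.2 ∈ sp K S₁ ∧ mono K p.1 p.2 ∈ sp K S₂} :=
  inf_eq S₁ S₂

lemma J_le {a b : ℕ} {L : Ideal (MvPolynomial (Fin 2) K)}
    (h2 : mono K a 0 ∈ L) (h3 : mono K 0 b ∈ L) : Jab K a b ≤ L := by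
  rw [Jab, Ideal.span_le, Set.insert_subset_iff, Set.singleton_subset_iff]
  exact ⟨h2, h3⟩

/-- The key square lemma. -/
lemma sqle {a b : ℕ} (T : Set (ℕ × ℕ))
    (hT0b : mono K 0 b ∈ sp K T)
    (hTD : ∀ p ∈ T, a * b ≤ b * p.1 + a * p.2)
    (hkey : ∀ u ∈ T, ∀ v ∈ T, a ≤ u.1 + v.1 → u.2 + v.2 < b →
      mono K (u.1 + v.1 - a) (u.2 + v.2) ∈ sp K T)
    (hkey2 : ∀ u ∈ T, ∀ v ∈ T, u.1 + v.1 < a → b ≤ u.2 + v.2 →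
      mono K (u.1 + v.1) (u.2 + v.2 - b) ∈ sp K T) :
    sp K T ^ 2 ≤ Jab K a b * sp K T := by
  rw [pow_two, span_mul', sp, Ideal.span_le]
  rintro _ ⟨m, ⟨u, hu, v, hv, rfl⟩, rfl⟩
  rw [SetLike.mem_coe]
  show mono K ((u + v).1) ((u + v).2) ∈ _
  rw [Prod.fst_add, Prod.snd_add, mem_J_mul' T]
  rcases le_or_gt a (u.1 + v.1) with h1 | h1
  · rcases le_or_gt b (u.2 + v.2) with h2 | h2
    · obtain ⟨p, hp, hp1, hp2⟩ := memMono'.mp hT0b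
      exact Or.inl ⟨h1, memMono'.mpr ⟨p, hp, by omega, by omega⟩⟩
    · exact Or.inl ⟨h1, hkey u hu v hv h1 h2⟩
  · have hb2 : b ≤ u.2 + v.2 := by
      by_contra hc
      push_neg at hc
      have m1 : b * (u.1 + v.1 + 1) ≤ b * a := Nat.mul_le_mul_left b h1
      have m2 : a * (u.2 + v.2 + 1) ≤ a * b := Nat.mul_le_mul_left a hc
      have d1 := hTD u hu
      have d2 := hTD v hv
      have ha1 : 1 ≤ a := by omega
      nlinarith
    exact Or.inr ⟨hb2, hkey2 u hu v hv h1 hb2⟩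

def InClass' (K : Type*) [Field K] (a b : ℕ) (I : Ideal (MvPolynomial (Fin 2) K)) : Prop :=
  (∃ S : Set (ℕ × ℕ), I = Ideal.span ((fun p : ℕ × ℕ => mono K p.1 p.2) '' S)) ∧
  mono K a 0 ∈ I ∧ mono K 0 b ∈ I ∧
    ∀ c d : ℕ, mono K c d ∈ I → a * b ≤ b * c + a * d

def Dset (a b : ℕ) : Set (ℕ × ℕ) := {p | a * b ≤ b * p.1 + a * p.2}

def E0 (K : Type*) [Field K] (a b : ℕ) (I : Ideal (MvPolynomial (Fin 2) K)) : Set (ℕ × ℕ) :=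
  {p | ∀ L' : Ideal (MvPolynomial (Fin 2) K), InClass' K a b L' → I ≤ L' →
    L' ≠ Jab K a b → L' ^ 2 = Jab K a b * L' → mono K p.1 p.2 ∈ L'}

lemma mem_Dset {a b : ℕ} {p : ℕ × ℕ} : p ∈ Dset a b ↔ a * b ≤ b * p.1 + a * p.2 := Iff.rfl

lemma Jbar_cond {a b : ℕ} (ha : 0 < a) (hb : 0 < b)
    (I : Ideal (MvPolynomial (Fin 2) K)) (hI : InClass' K a b I)
    (hIJ : I ≠ Jab K a b) :
    InClass' K a b (sp K (Dset a b)) ∧ I ≤ sp K (Dset a b) ∧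
      sp K (Dset a b) ≠ Jab K a b ∧
      sp K (Dset a b) ^ 2 = Jab K a b * sp K (Dset a b) := by
  have hJI : Jab K a b ≤ I := J_le hI.2.1 hI.2.2.1
  have ha0 : mono K a 0 ∈ sp K (Dset a b) :=
    memMono'.mpr ⟨(a, 0), by simp [mem_Dset, Nat.mul_comm], le_refl _, le_refl _⟩
  have h0b : mono K 0 b ∈ sp K (Dset a b) :=
    memMono'.mpr ⟨(0, b), by simp [mem_Dset], le_refl _, le_refl _⟩
  have hclass : InClass' K a b (sp K (Dset a b)) := by
    refine ⟨⟨Dset a b, rfl⟩, ha0, h0b, ?_⟩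
    intro c d h
    obtain ⟨p, hp, h1, h2⟩ := memMono'.mp h
    calc a * b ≤ b * p.1 + a * p.2 := hp
    _ ≤ b * c + a * d := by
        exact Nat.add_le_add (Nat.mul_le_mul_left b h1) (Nat.mul_le_mul_left a h2)
  have hIle : I ≤ sp K (Dset a b) := by
    obtain ⟨SI, hSI⟩ := hI.1
    have hb2 := hI.2.2.2
    rw [hSI, Ideal.span_le]
    rintro _ ⟨p, hp, rfl⟩
    rw [SetLike.mem_coe]
    refine memMono'.mpr ⟨p, ?_, le_refl _, le_refl _⟩
    refine hb2 p.1 p.2 ?_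
    rw [hSI]
    exact Ideal.subset_span (Set.mem_image_of_mem _ hp)
  refine ⟨hclass, hIle, ?_, ?_⟩
  · intro h
    exact hIJ (le_antisymm (hIle.trans h.le) hJI)
  · refine le_antisymm ?_ ?_
    · apply sqle (Dset a b) h0b (fun p hp => hp)
      · intro u hu v hv h1 h2
        refine memMono'.mpr ⟨(u.1 + v.1 - a, u.2 + v.2), ?_, le_refl _, le_refl _⟩
        rw [mem_Dset]
        obtain ⟨t, ht⟩ := Nat.exists_eq_add_of_le h1
        have du := mem_Dset.mp hu
        have dv := mem_Dset.mp hv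
        simp only [ht]
        have : a + t - a = t := by omega
        rw [this]
        nlinarith
      · intro u hu v hv h1 h2
        refine memMono'.mpr ⟨(u.1 + v.1, u.2 + v.2 - b), ?_, le_refl _, le_refl _⟩
        rw [mem_Dset]
        obtain ⟨t, ht⟩ := Nat.exists_eq_add_of_le h2
        have du := mem_Dset.mp hu
        have dv := mem_Dset.mp hv
        simp only [ht]
        have : b + t - b = t := by omega
        rw [this]
        nlinarith
    · rw [pow_two]
      exact Ideal.mul_mono (J_le ha0 h0b) (le_refl _)

theorem stmt15aux (K : Type*) [Field K] (a b : ℕ) (ha : 1 < a) (hab : a ≤ b)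
    (I : Ideal (MvPolynomial (Fin 2) K)) (hI : InClass' K a b I)
    (hIJ : I ≠ Jab K a b) :
    (∀ L₁ L₂ : Ideal (MvPolynomial (Fin 2) K),
        InClass' K a b L₁ → InClass' K a b L₂ → I ≤ L₁ → I ≤ L₂ →
        L₁ ≠ Jab K a b → L₂ ≠ Jab K a b →
        L₁ ^ 2 = Jab K a b * L₁ → L₂ ^ 2 = Jab K a b * L₂ →
        L₁ ⊓ L₂ ≠ Jab K a b ∧ (L₁ ⊓ L₂) ^ 2 = Jab K a b * (L₁ ⊓ L₂))
    ∧ ∃! L : Ideal (MvPolynomial (Fin 2) K),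
        InClass' K a b L ∧ I ≤ L ∧ L ≠ Jab K a b ∧ L ^ 2 = Jab K a b * L ∧
        ∀ L' : Ideal (MvPolynomial (Fin 2) K),
          InClass' K a b L' → I ≤ L' → L' ≠ Jab K a b → L' ^ 2 = Jab K a b * L' →
          L ≤ L' := by
  have ha0 : 0 < a := by omega
  have hb0 : 0 < b := by omega
  have hJI : Jab K a b ≤ I := J_le hI.2.1 hI.2.2.1
  constructor
  · -- part (a)
    intro L₁ L₂ h1 h2 hIL1 hIL2 hne1 hne2 hsq1 hsq2
    constructor
    · intro h
      exact hIJ (le_antisymm ((le_inf hIL1 hIL2).trans h.le) hJI)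
    · obtain ⟨S₁, hS₁⟩ := h1.1
      obtain ⟨S₂, hS₂⟩ := h2.1
      subst hS₁; subst hS₂
      simp only [sp_def] at *
      have hT : sp K S₁ ⊓ sp K S₂
          = sp K {p : ℕ × ℕ | mono K p.1 p.2 ∈ sp K S₁ ∧ mono K p.1 p.2 ∈ sp K S₂} :=
        inf_eq' S₁ S₂
      set T : Set (ℕ × ℕ) :=
        {p : ℕ × ℕ | mono K p.1 p.2 ∈ sp K S₁ ∧ mono K p.1 p.2 ∈ sp K S₂} with hTdef
      rw [hT]
      have hkey : ∀ u ∈ T, ∀ v ∈ T, ∀ {L : Ideal (MvPolynomial (Fin 2) K)} {S : Set (ℕ × ℕ)},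
          L = sp K S → mono K u.1 u.2 ∈ L → mono K v.1 v.2 ∈ L →
          L ^ 2 = Jab K a b * L →
          mono K (u.1 + v.1) (u.2 + v.2) ∈ Jab K a b * sp K S := by
        intro u _ v _ L S hLS hu hv hsq
        have hm : mono K u.1 u.2 * mono K v.1 v.2 ∈ L * L := Ideal.mul_mem_mul hu hv
        rw [mono_mul, ← pow_two, hsq, hLS] at hm
        exact hm
      apply le_antisymm
      · apply sqle T
        · exact memMono'.mpr ⟨(0, b), ⟨h1.2.2.1, h2.2.2.1⟩, le_refl _, le_refl _⟩
        · exact fun p hp => h1.2.2.2 p.1 p.2 hp.1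
        · intro u hu v hv hc hd
          refine memMono'.mpr ⟨(u.1 + v.1 - a, u.2 + v.2), ⟨?_, ?_⟩, le_refl _, le_refl _⟩
          · rcases (mem_J_mul' S₁ _ _).mp (hkey u hu v hv rfl hu.1 hv.1 hsq1) with
              ⟨_, h⟩ | ⟨hb', _⟩
            · exact h
            · omega
          · rcases (mem_J_mul' S₂ _ _).mp (hkey u hu v hv rfl hu.2 hv.2 hsq2) with
              ⟨_, h⟩ | ⟨hb', _⟩
            · exact h
            · omega
        · intro u hu v hv hc hd
          refine memMono'.mpr ⟨(u.1 + v.1, u.2 + v.2 - b), ⟨?_, ?_⟩, le_refl _, le_refl _⟩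
          · rcases (mem_J_mul' S₁ _ _).mp (hkey u hu v hv rfl hu.1 hv.1 hsq1) with
              ⟨ha', _⟩ | ⟨_, h⟩
            · omega
            · exact h
          · rcases (mem_J_mul' S₂ _ _).mp (hkey u hu v hv rfl hu.2 hv.2 hsq2) with
              ⟨ha', _⟩ | ⟨_, h⟩
            · omega
            · exact h
      · rw [pow_two]
        refine Ideal.mul_mono (J_le ?_ ?_) (le_refl _)
        · exact memMono'.mpr ⟨(a, 0), ⟨h1.2.1, h2.2.1⟩, le_refl _, le_refl _⟩
        · exact memMono'.mpr ⟨(0, b), ⟨h1.2.2.1, h2.2.2.1⟩, le_refl _, le_refl _⟩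
  · -- part (b)
    obtain ⟨hDclass, hDle, hDne, hDsq⟩ := Jbar_cond ha0 hb0 I hI hIJ
    have hE0D : ∀ p ∈ E0 K a b I, p ∈ Dset a b := by
      intro p hp
      obtain ⟨q, hq, h1, h2⟩ := memMono'.mp (hp _ hDclass hDle hDne hDsq)
      calc a * b ≤ b * q.1 + a * q.2 := hq
      _ ≤ b * p.1 + a * p.2 :=
          Nat.add_le_add (Nat.mul_le_mul_left b h1) (Nat.mul_le_mul_left a h2)
    have ha0' : (a, 0) ∈ E0 K a b I := fun L' hL' _ _ _ => hL'.2.1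
    have h0b' : (0, b) ∈ E0 K a b I := fun L' hL' _ _ _ => hL'.2.2.1
    have hclass : InClass' K a b (sp K (E0 K a b I)) := by
      refine ⟨⟨E0 K a b I, rfl⟩,
        memMono'.mpr ⟨(a, 0), ha0', le_refl _, le_refl _⟩,
        memMono'.mpr ⟨(0, b), h0b', le_refl _, le_refl _⟩, ?_⟩
      intro c d h
      obtain ⟨p, hp, h1, h2⟩ := memMono'.mp h
      calc a * b ≤ b * p.1 + a * p.2 := hE0D p hp
      _ ≤ b * c + a * d :=
          Nat.add_le_add (Nat.mul_le_mul_left b h1) (Nat.mul_le_mul_left a h2)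
    have hIle : I ≤ sp K (E0 K a b I) := by
      obtain ⟨SI, hSI⟩ := hI.1
      rw [hSI, Ideal.span_le]
      rintro _ ⟨p, hp, rfl⟩
      rw [SetLike.mem_coe]
      refine memMono'.mpr ⟨p, ?_, le_refl _, le_refl _⟩
      intro L' _ hIL' _ _
      exact hIL' (Ideal.subset_span (Set.mem_image_of_mem _ hp))
    have hmin : ∀ L' : Ideal (MvPolynomial (Fin 2) K),
        InClass' K a b L' → I ≤ L' → L' ≠ Jab K a b → L' ^ 2 = Jab K a b * L' →
        sp K (E0 K a b I) ≤ L' := by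
      intro L' hL' h1 h2 h3
      rw [sp, Ideal.span_le]
      rintro _ ⟨p, hp, rfl⟩
      exact hp L' hL' h1 h2 h3
    have hne : sp K (E0 K a b I) ≠ Jab K a b := by
      intro h
      exact hIJ (le_antisymm (hIle.trans h.le) hJI)
    have hsq : sp K (E0 K a b I) ^ 2 = Jab K a b * sp K (E0 K a b I) := by
      refine le_antisymm ?_ ?_
      · apply sqle (E0 K a b I)
        · exact memMono'.mpr ⟨(0, b), h0b', le_refl _, le_refl _⟩
        · exact fun p hp => hE0D p hp
        · intro u hu v hv hc hd
          refine memMono'.mpr ⟨(u.1 + v.1 - a, u.2 + v.2), ?_, le_refl _, le_refl _⟩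
          intro L' hL' hIL' hneL' hsqL'
          obtain ⟨S', hS'⟩ := hL'.1
          have hmu : mono K u.1 u.2 ∈ L' := hu L' hL' hIL' hneL' hsqL'
          have hmv : mono K v.1 v.2 ∈ L' := hv L' hL' hIL' hneL' hsqL'
          have hm : mono K (u.1 + v.1) (u.2 + v.2) ∈ Jab K a b * L' := by
            have h' := Ideal.mul_mem_mul hmu hmv
            rw [mono_mul, ← pow_two, hsqL'] at h'
            exact h'
          show mono K (u.1 + v.1 - a) (u.2 + v.2) ∈ L'
          rw [hS', sp_def] at hm ⊢
          rcases (mem_J_mul' S' _ _).mp hm with ⟨_, h⟩ | ⟨hb', _⟩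
          · exact h
          · omega
        · intro u hu v hv hc hd
          refine memMono'.mpr ⟨(u.1 + v.1, u.2 + v.2 - b), ?_, le_refl _, le_refl _⟩
          intro L' hL' hIL' hneL' hsqL'
          obtain ⟨S', hS'⟩ := hL'.1
          have hmu : mono K u.1 u.2 ∈ L' := hu L' hL' hIL' hneL' hsqL'
          have hmv : mono K v.1 v.2 ∈ L' := hv L' hL' hIL' hneL' hsqL'
          have hm : mono K (u.1 + v.1) (u.2 + v.2) ∈ Jab K a b * L' := by
            have h' := Ideal.mul_mem_mul hmu hmv
            rw [mono_mul, ← pow_two, hsqL'] at h'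
            exact h'
          show mono K (u.1 + v.1) (u.2 + v.2 - b) ∈ L'
          rw [hS', sp_def] at hm ⊢
          rcases (mem_J_mul' S' _ _).mp hm with ⟨ha', _⟩ | ⟨_, h⟩
          · omega
          · exact h
      · rw [pow_two]
        refine Ideal.mul_mono (J_le ?_ ?_) (le_refl _)
        · exact memMono'.mpr ⟨(a, 0), ha0', le_refl _, le_refl _⟩
        · exact memMono'.mpr ⟨(0, b), h0b', le_refl _, le_refl _⟩
    refine ⟨sp K (E0 K a b I), ⟨hclass, hIle, hne, hsq, hmin⟩, ?_⟩
    rintro y ⟨hy1, hy2, hy3, hy4, hy5⟩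
    exact le_antisymm (hy5 _ hclass hIle hne hsq) (hmin y hy1 hy2 hy3 hy4)

end Aux

theorem stmt15 (K : Type*) [Field K] (a b : ℕ) (ha : 1 < a) (hab : a ≤ b)
    (I : Ideal (MvPolynomial (Fin 2) K)) (hI : InClass K a b I)
    (hIJ : I ≠ Jab K a b) :
    (∀ L₁ L₂ : Ideal (MvPolynomial (Fin 2) K),
        InClass K a b L₁ → InClass K a b L₂ → I ≤ L₁ → I ≤ L₂ →
        L₁ ≠ Jab K a b → L₂ ≠ Jab K a b →
        L₁ ^ 2 = Jab K a b * L₁ → L₂ ^ 2 = Jab K a b * L₂ →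
        L₁ ⊓ L₂ ≠ Jab K a b ∧ (L₁ ⊓ L₂) ^ 2 = Jab K a b * (L₁ ⊓ L₂))
    ∧ ∃! L : Ideal (MvPolynomial (Fin 2) K),
        InClass K a b L ∧ I ≤ L ∧ L ≠ Jab K a b ∧ L ^ 2 = Jab K a b * L ∧
        ∀ L' : Ideal (MvPolynomial (Fin 2) K),
          InClass K a b L' → I ≤ L' → L' ≠ Jab K a b → L' ^ 2 = Jab K a b * L' →
          L ≤ L' := by
  
  have h : ∀ L : Ideal (MvPolynomial (Fin 2) K), InClass K a b L ↔ InClass' K a b L :=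
    fun L => Iff.rfl
  simp only [h] at hI ⊢
  exact stmt15aux K a b ha hab I hI hIJ
end
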